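/- Let n and k1 be powers of two with 2k1 ≤ n, let X, G ∈ ℂ^n with Ĝ symmetric about zero (Ĝ_{−f} = Ĝ_f for all f), fix r ∈ [2k1], set a_r = nr/(2k1) and X^r_i = X_{i + a_r}, and define Z^r ∈ ℂ^{n/k1} by Z^r_j = (1/k1) Σ_{i∈[k1]} (G · X^r)_{j + (n/k1)·i}. Then for every j ∈ [n/k1]: Ẑ^r_j = Σ_{f∈[n]} Ĝ_{f − k1·j} · X̂_f · ω_n^{a_r·f} (in particular Ẑ^r_j = (X̂^r ⋆ Ĝ)_{j·k1}, the duality of subsampling and aliasing). -/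

import Mathlib

open Finset

/-- Discrete Fourier transform of a length-`n` signal, with `1/n` normalization. -/
noncomputable def dft (n : ℕ) [NeZero n] (X : ZMod n → ℂ) : ZMod n → ℂ :=
  fun f => (n : ℂ)⁻¹ * ∑ t : ZMod n, X t *
    Complex.exp (-(2 * Real.pi * Complex.I) * ((f * t).val : ℂ) / (n : ℂ))

/-- `Z_j = (1/k1) ∑_{i ∈ [k1]} (G · X^a)_{j + (n/k1)·i}`, where `X^a_t = X_{t+a}`:
a downsampled (aliased) version of the filtered, time-shifted signal. -/
noncomputable def downsample (n k1 : ℕ) [NeZero k1] (X G : ZMod n → ℂ) (a : ZMod n) :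
    ZMod (n / k1) → ℂ :=
  fun j => (k1 : ℂ)⁻¹ * ∑ i : ZMod k1,
    G ((j.val : ZMod n) + ((n / k1 : ℕ) : ZMod n) * (i.val : ZMod n)) *
      X ((j.val : ZMod n) + ((n / k1 : ℕ) : ZMod n) * (i.val : ZMod n) + a)

/-!
Summing the `k1` aliases `W (s + (n/k1) i)` and then keeping `n/k1` samples is dual to
sampling the spectrum at multiples of `k1`: the DFT of the aliased signal at `j` is `Ŵ (k1 j)`,
because `ω_n ^ (k1 j (s + (n/k1) i)) = ω_{n/k1} ^ (j s)`. For `W = G · X^r`, expanding `X^r` by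
Fourier inversion turns `Ŵ` into the convolution `∑_f Ĝ (g - f) X̂ f ω_n ^ (a_r f)`, and the
symmetry of `Ĝ` flips `Ĝ (k1 j - f)` into `Ĝ (f - k1 j)`.
-/

open ZMod (stdAddChar)

lemma dft_apply_eq_sum (n : ℕ) [NeZero n] (X : ZMod n → ℂ) (f : ZMod n) :
    dft n X f = (n : ℂ)⁻¹ * ∑ t, stdAddChar (-(t * f)) * X t := by
  simp only [dft, AddChar.map_neg_eq_inv, ZMod.stdAddChar_apply, ZMod.toCircle_apply,
    ← Complex.exp_neg]
  congr 1
  refine sum_congr rfl fun t _ => ?_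
  rw [mul_comm, mul_comm t]
  congr 2
  ring

lemma sum_dft_mul_stdAddChar (n : ℕ) [NeZero n] (X : ZMod n → ℂ) (t : ZMod n) :
    ∑ f, dft n X f * stdAddChar (f * t) = X t := by
  conv_rhs => rw [← LinearEquiv.symm_apply_apply ZMod.dft X, ZMod.invDFT_apply]
  simp only [ZMod.dft_apply, dft_apply_eq_sum, smul_eq_mul, mul_sum, sum_mul]
  exact sum_congr rfl fun f _ => sum_congr rfl fun s _ => by ring

lemma dft_mul_comp_add (n : ℕ) [NeZero n] (G X : ZMod n → ℂ) (a g : ZMod n) :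
    dft n (fun t => G t * X (t + a)) g =
      ∑ f, dft n G (g - f) * dft n X f * stdAddChar (a * f) := by
  have hchar (t f : ZMod n) : stdAddChar (-(t * g)) * stdAddChar (f * (t + a)) =
      stdAddChar (-(t * (g - f))) * stdAddChar (a * f) := by
    rw [← AddChar.map_add_eq_mul, ← AddChar.map_add_eq_mul]
    ring_nf
  calc dft n (fun t => G t * X (t + a)) g
      = (n : ℂ)⁻¹ * ∑ t, ∑ f,
          stdAddChar (-(t * g)) * G t * (dft n X f * stdAddChar (f * (t + a))) := by
        rw [dft_apply_eq_sum]
        congr 1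
        refine sum_congr rfl fun t _ => ?_
        rw [← sum_dft_mul_stdAddChar n X (t + a), mul_sum, mul_sum]
        exact sum_congr rfl fun f _ => by ring
    _ = ∑ f, (n : ℂ)⁻¹ * (∑ t, stdAddChar (-(t * (g - f))) * G t) * dft n X f *
          stdAddChar (a * f) := by
        rw [sum_comm, mul_sum]
        refine sum_congr rfl fun f _ => ?_
        simp only [mul_sum, sum_mul]
        refine sum_congr rfl fun t _ => ?_
        linear_combination (n : ℂ)⁻¹ * G t * dft n X f * hchar t f
    _ = ∑ f, dft n G (g - f) * dft n X f * stdAddChar (a * f) := by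
        simp only [dft_apply_eq_sum]

lemma stdAddChar_natCast_mul_intCast {k m n : ℕ} [NeZero m] [NeZero n] (hkm : k * m = n)
    (x : ℤ) : stdAddChar ((k : ZMod n) * (x : ZMod n)) = stdAddChar (x : ZMod m) := by
  have hk : (k : ℂ) ≠ 0 := Nat.cast_ne_zero.2 (left_ne_zero_of_mul (hkm ▸ NeZero.ne n))
  rw [← Int.cast_natCast, ← Int.cast_mul, ZMod.stdAddChar_coe, ZMod.stdAddChar_coe, ← hkm]
  congr 1
  push_cast
  field_simp

section Aliasing

variable {k m n : ℕ} [NeZero k] [NeZero m]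

lemma val_natCast_val_add_mul (hkm : k * m = n) (s : ZMod m) (i : ZMod k) :
    ((s.val : ZMod n) + (m : ZMod n) * (i.val : ZMod n)).val = s.val + m * i.val := by
  have hlt : s.val + m * i.val < n := by
    have := s.val_lt
    have := i.val_lt
    nlinarith
  rw [← Nat.cast_mul, ← Nat.cast_add, ZMod.val_natCast_of_lt hlt]

lemma sum_eq_sum_sum_val_add_mul {M : Type*} [AddCommMonoid M] [NeZero n] (hkm : k * m = n)
    (F : ZMod n → M) :
    ∑ t, F t =
      ∑ s : ZMod m, ∑ i : ZMod k, F ((s.val : ZMod n) + (m : ZMod n) * (i.val : ZMod n)) := by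
  set φ : ZMod m × ZMod k → ZMod n := fun p => (p.1.val : ZMod n) + m * p.2.val
  have hφ : Function.LeftInverse
      (fun t : ZMod n => ((t.val : ZMod m), ((t.val / m : ℕ) : ZMod k))) φ := by
    rintro ⟨s, i⟩
    simp only [φ, val_natCast_val_add_mul hkm, Nat.add_mul_div_left _ _ (NeZero.pos m),
      Nat.div_eq_of_lt s.val_lt, zero_add, ZMod.natCast_zmod_val]
    simp
  have hbij : Function.Bijective φ := by
    rw [Fintype.bijective_iff_injective_and_card]
    refine ⟨hφ.injective, ?_⟩
    simp [ZMod.card, ← hkm, mul_comm]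
  rw [← Fintype.sum_prod_type' (fun s i => F (φ (s, i))),
    Fintype.sum_bijective φ hbij _ _ fun _ => rfl]

lemma dft_alias [NeZero n] (hkm : k * m = n) (W : ZMod n → ℂ) (j : ZMod m) :
    dft m (fun s => (k : ℂ)⁻¹ *
        ∑ i : ZMod k, W ((s.val : ZMod n) + (m : ZMod n) * (i.val : ZMod n))) j =
      dft n W (k * j.val) := by
  have hker (s : ZMod m) (i : ZMod k) :
      stdAddChar (-(((s.val : ZMod n) + (m : ZMod n) * (i.val : ZMod n)) *
        ((k : ZMod n) * (j.val : ZMod n)))) = stdAddChar (-(s * j)) := by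
    have hn : ((k * m : ℕ) : ZMod n) = 0 := by rw [hkm, ZMod.natCast_self]
    calc _ = stdAddChar ((k : ZMod n) * ((-(s.val * j.val : ℕ) : ℤ) : ZMod n)) := by
          push_cast at hn ⊢
          congr 1
          linear_combination (-(i.val * j.val : ZMod n)) * hn
      _ = _ := by
          rw [stdAddChar_natCast_mul_intCast hkm]
          push_cast
          simp only [ZMod.natCast_zmod_val]
  have hinv : (n : ℂ)⁻¹ = (m : ℂ)⁻¹ * (k : ℂ)⁻¹ := by
    rw [← hkm, Nat.cast_mul, mul_inv, mul_comm]
  rw [dft_apply_eq_sum, dft_apply_eq_sum, sum_eq_sum_sum_val_add_mul hkm]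
  simp only [hker, hinv, mul_sum]
  exact sum_congr rfl fun s _ => sum_congr rfl fun i _ => by ring

end Aliasing

theorem dft_downsample_general (n k1 : ℕ) [NeZero n] [NeZero k1] [NeZero (n / k1)]
    (hn : ∃ a, n = 2 ^ a) (hk1 : ∃ a, k1 = 2 ^ a) (hkn : 2 * k1 ≤ n)
    (X G : ZMod n → ℂ) (hGsymm : ∀ f : ZMod n, dft n G (-f) = dft n G f)
    (r : ZMod (2 * k1)) (j : ZMod (n / k1)) :
    dft (n / k1)
        (downsample n k1 X G (((n / (2 * k1) : ℕ) : ZMod n) * (r.val : ZMod n))) j =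
      ∑ f : ZMod n,
        dft n G (f - (k1 : ZMod n) * (j.val : ZMod n)) * dft n X f *
          Complex.exp (2 * Real.pi * Complex.I *
            ((((n / (2 * k1) : ℕ) : ZMod n) * (r.val : ZMod n) * f).val : ℂ) / (n : ℂ)) := by
  have hk1n : k1 ∣ n := by
    obtain ⟨b, rfl⟩ := hn
    obtain ⟨c, rfl⟩ := hk1
    exact (Nat.pow_dvd_pow_iff_le_right one_lt_two).2
      ((Nat.pow_le_pow_iff_right one_lt_two).1 ((Nat.le_mul_of_pos_left _ two_pos).trans hkn))
  set a : ZMod n := ((n / (2 * k1) : ℕ) : ZMod n) * (r.val : ZMod n)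
  calc _ = dft n (fun t => G t * X (t + a)) (k1 * j.val) :=
        dft_alias (Nat.mul_div_cancel' hk1n) _ j
    _ = ∑ f, dft n G (k1 * j.val - f) * dft n X f * stdAddChar (a * f) := dft_mul_comp_add ..
    _ = _ := sum_congr rfl fun f _ => by
        rw [← neg_sub, hGsymm, ZMod.stdAddChar_apply, ZMod.toCircle_apply]

/-- The duality of subsampling and aliasing: for `Ĝ` symmetric about zero,
`r ∈ [2k1]`, `a_r = nr/(2k1)` and `Z^r` the corresponding downsampled signal,
`Ẑ^r_j = ∑_{f ∈ [n]} Ĝ_{f − k1·j} X̂_f ω_n^{a_r·f}` for every `j ∈ [n/k1]`. -/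
theorem dft_downsample (n k1 : ℕ) [NeZero n] [NeZero k1] [NeZero (n / k1)]
    [NeZero (2 * k1)]
    (hn : ∃ a, n = 2 ^ a) (hk1 : ∃ a, k1 = 2 ^ a) (hkn : 2 * k1 ≤ n)
    (X G : ZMod n → ℂ) (hGsymm : ∀ f : ZMod n, dft n G (-f) = dft n G f)
    (r : ZMod (2 * k1)) (j : ZMod (n / k1)) :
    dft (n / k1)
        (downsample n k1 X G (((n / (2 * k1) : ℕ) : ZMod n) * (r.val : ZMod n))) j =
      ∑ f : ZMod n,
        dft n G (f - (k1 : ZMod n) * (j.val : ZMod n)) * dft n X f *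
          Complex.exp (2 * Real.pi * Complex.I *
            ((((n / (2 * k1) : ℕ) : ZMod n) * (r.val : ZMod n) * f).val : ℂ) / (n : ℂ)) :=
  dft_downsample_general n k1 hn hk1 hkn X G hGsymm r j
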